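/- arXiv:0809.1088 — 7 statements merged into one kernel-verified Lean document; each statement's English description precedes it below -/
import Mathlib

section
/- Let p be an odd prime and let n ≥ 1 be a natural number. If p^(2^n) − 1 is a prime power, then p = 3 and n = 1 (so that p^(2^n) − 1 = 8). -/
/-- Auxiliary: `a^m - 1 ∣ a^(m*t) - 1`. -/
lemma aux_dvd (a m t : ℕ) : a ^ m - 1 ∣ a ^ (m * t) - 1 := by
  have := Nat.sub_dvd_pow_sub_pow (a ^ m) 1 t
  simpa [← pow_mul] using this

/-- Let `p` be an odd prime and `n ≥ 1`. If `p^(2^n) - 1` is a prime power,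
then `p = 3` and `n = 1`. -/
theorem stmt_0 (p n : ℕ) (hp : p.Prime) (hodd : Odd p) (hn : 1 ≤ n)
    (h : IsPrimePow (p ^ (2 ^ n) - 1)) : p = 3 ∧ n = 1 := by
  obtain ⟨q, k, hq, hk, hN⟩ := h
  have hq' : q.Prime := hq.nat_prime
  have hp3 : 3 ≤ p := by
    have h2 := hp.two_le
    rcases hodd with ⟨m, hm⟩
    omega
  -- p^(2^n) is odd and ≥ 9
  have hppow : Odd (p ^ 2 ^ n) := hodd.pow
  have h2n2 : 2 ≤ 2 ^ n := Nat.one_lt_two_pow_iff.mpr (by omega)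
  have hbig : 9 ≤ p ^ 2 ^ n := by
    calc (9 : ℕ) = 3 ^ 2 := by norm_num
    _ ≤ p ^ 2 := Nat.pow_le_pow_left hp3 2
    _ ≤ p ^ 2 ^ n := Nat.pow_le_pow_right (by omega) h2n2
  have heven : 2 ∣ p ^ 2 ^ n - 1 := by
    rcases hppow with ⟨m, hm⟩
    omega
  have hq2 : q = 2 := by
    have h2q : (2 : ℕ) ∣ q := by
      exact Nat.Prime.dvd_of_dvd_pow Nat.prime_two (show 2 ∣ q ^ k from hN ▸ heven)
    exact ((Nat.prime_dvd_prime_iff_eq Nat.prime_two hq').mp h2q).symm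
  subst hq2
  -- p^2 - 1 divides 2^k
  have hsq : p ^ 2 - 1 ∣ 2 ^ k := by
    rw [hN]
    have : p ^ 2 - 1 ∣ p ^ (2 * 2 ^ (n - 1)) - 1 := aux_dvd p 2 (2 ^ (n - 1))
    have h2n : 2 * 2 ^ (n - 1) = 2 ^ n := by
      obtain ⟨m, rfl⟩ : ∃ m, n = m + 1 := ⟨n - 1, by omega⟩
      simp [pow_succ]; ring
    rwa [h2n] at this
  have hfac : p ^ 2 - 1 = (p - 1) * (p + 1) := by
    have h1 : 1 ≤ p := by omega
    have h2 : 1 ≤ p ^ 2 := Nat.one_le_pow _ _ (by omega)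
    zify [h1, h2]; ring
  have hpm1 : p - 1 ∣ 2 ^ k := (Dvd.intro _ (hfac.symm)).trans hsq
  have hpp1 : p + 1 ∣ 2 ^ k := (Dvd.intro_left _ (hfac.symm)).trans hsq
  obtain ⟨a, _, ha⟩ := (Nat.dvd_prime_pow Nat.prime_two).mp hpm1
  obtain ⟨b, _, hb⟩ := (Nat.dvd_prime_pow Nat.prime_two).mp hpp1
  -- p = 3
  have hb2 : 2 ≤ b := by
    by_contra hb2
    interval_cases b <;> omega
  have ha1 : a = 1 := by
    by_contra ha1
    rcases Nat.lt_or_ge a 1 with h' | h'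
    · interval_cases a <;> omega
    · have ha2 : 2 ≤ a := by omega
      obtain ⟨x, hx⟩ : (4 : ℕ) ∣ 2 ^ a := by
        calc (4 : ℕ) = 2 ^ 2 := by norm_num
        _ ∣ 2 ^ a := pow_dvd_pow 2 ha2
      obtain ⟨y, hy⟩ : (4 : ℕ) ∣ 2 ^ b := by
        calc (4 : ℕ) = 2 ^ 2 := by norm_num
        _ ∣ 2 ^ b := pow_dvd_pow 2 hb2
      omega
  have hp3' : p = 3 := by rw [ha1] at ha; omega
  subst hp3'
  refine ⟨rfl, ?_⟩
  -- n = 1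
  by_contra hn1
  have hn2 : 2 ≤ n := by omega
  have h80 : (80 : ℕ) ∣ 2 ^ k := by
    rw [hN]
    have : 3 ^ 4 - 1 ∣ 3 ^ (4 * 2 ^ (n - 2)) - 1 := aux_dvd 3 4 (2 ^ (n - 2))
    have h2n : 4 * 2 ^ (n - 2) = 2 ^ n := by
      obtain ⟨m, rfl⟩ : ∃ m, n = m + 2 := ⟨n - 2, by omega⟩
      simp [pow_succ]; ring
    rw [h2n] at this
    simpa using this
  have h5 : (5 : ℕ) ∣ 2 ^ k := dvd_trans (by norm_num) h80
  have := Nat.Prime.dvd_of_dvd_pow (by norm_num : Nat.Prime 5) h5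
  omega
end

section
/- Let p be a fixed odd prime. Then there is at most one integer n ≥ 0 for which p^(2^n) + 1 is a prime power: if p^(2^n) + 1 and p^(2^n') + 1 are both prime powers for n, n' ≥ 0, then n = n'. -/
lemma aux_n_eq_zero (p : ℕ) (hp : p.Prime) (hodd : Odd p) (n : ℕ)
    (h : IsPrimePow (p ^ (2 ^ n) + 1)) : n = 0 := by
  by_contra hn
  obtain ⟨m, rfl⟩ : ∃ m, n = m + 1 := ⟨n - 1, by omega⟩
  obtain ⟨q, k, hq, hk, hqk⟩ := h
  have hq' : Nat.Prime q := Nat.prime_iff.mpr hq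
  obtain ⟨t, ht⟩ : Odd (p ^ 2 ^ m) := hodd.pow
  have hsq : p ^ 2 ^ (m + 1) = (p ^ 2 ^ m) ^ 2 := by
    rw [pow_succ, pow_mul]
  have hval : q ^ k = 4 * (t * t + t) + 2 := by
    rw [hqk, hsq, ht]; ring
  have h2 : 2 ∣ q ^ k := ⟨2 * (t * t + t) + 1, by omega⟩
  have hq2 : q = 2 := by
    have := Nat.Prime.dvd_of_dvd_pow (p := 2) Nat.prime_two h2
    exact ((Nat.prime_dvd_prime_iff_eq Nat.prime_two hq').mp this).symm
  subst hq2
  have hple : 2 ≤ p ^ 2 ^ m := (Nat.one_lt_pow (by positivity) hp.one_lt)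
  rcases Nat.lt_or_ge k 2 with hk2 | hk2
  · interval_cases k
    · simp at hval
      omega
  · obtain ⟨j, rfl⟩ : ∃ j, k = j + 2 := ⟨k - 2, by omega⟩
    have : 2 ^ (j + 2) = 4 * 2 ^ j := by ring
    omega

/-- For a fixed odd prime `p`, there is at most one `n ≥ 0` for which
`p^(2^n) + 1` is a prime power. -/
theorem stmt_5 (p : ℕ) (hp : p.Prime) (hodd : Odd p)
    (n n' : ℕ) (h : IsPrimePow (p ^ (2 ^ n) + 1))
    (h' : IsPrimePow (p ^ (2 ^ n') + 1)) : n = n' := by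
  rw [aux_n_eq_zero p hp hodd n h, aux_n_eq_zero p hp hodd n' h']
end

section
/- Let a and b be coprime positive integers. Then the polynomial (X^a − 1)(X^b − 1) divides the polynomial (X^(ab) − 1)(X − 1) in the polynomial ring ℤ[X]. -/
open Polynomial

/-- For coprime positive integers `a, b`, the polynomial `(X^a - 1)(X^b - 1)`
divides `(X^(ab) - 1)(X - 1)` in `ℤ[X]`. -/
theorem stmt_10 (a b : ℕ) (ha : 0 < a) (hb : 0 < b) (hab : Nat.Coprime a b) :
    ((X : ℤ[X]) ^ a - 1) * ((X : ℤ[X]) ^ b - 1) ∣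
      ((X : ℤ[X]) ^ (a * b) - 1) * ((X : ℤ[X]) - 1) := by
  rw [← prod_cyclotomic_eq_X_pow_sub_one ha ℤ,
      ← prod_cyclotomic_eq_X_pow_sub_one hb ℤ,
      ← prod_cyclotomic_eq_X_pow_sub_one (Nat.mul_pos ha hb) ℤ,
      ← cyclotomic_one ℤ]
  have hinter : a.divisors ∩ b.divisors = {1} := by
    ext d
    simp only [Finset.mem_inter, Nat.mem_divisors, Finset.mem_singleton]
    constructor
    · rintro ⟨⟨hda, -⟩, hdb, -⟩
      exact Nat.eq_one_of_dvd_coprimes hab hda hdb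
    · rintro rfl
      exact ⟨⟨one_dvd _, ha.ne'⟩, one_dvd _, hb.ne'⟩
  have hunion : a.divisors ∪ b.divisors ⊆ (a * b).divisors := by
    intro d hd
    rcases Finset.mem_union.mp hd with h | h
    · rw [Nat.mem_divisors] at h ⊢
      exact ⟨h.1.mul_right b, (Nat.mul_pos ha hb).ne'⟩
    · rw [Nat.mem_divisors] at h ⊢
      exact ⟨h.1.mul_left a, (Nat.mul_pos ha hb).ne'⟩
  calc (∏ i ∈ a.divisors, cyclotomic i ℤ) * ∏ i ∈ b.divisors, cyclotomic i ℤ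
      = (∏ i ∈ a.divisors ∪ b.divisors, cyclotomic i ℤ) *
        ∏ i ∈ a.divisors ∩ b.divisors, cyclotomic i ℤ :=
        (Finset.prod_union_inter).symm
    _ ∣ (∏ i ∈ (a * b).divisors, cyclotomic i ℤ) * cyclotomic 1 ℤ := by
        apply mul_dvd_mul
        · exact Finset.prod_dvd_prod_of_subset _ _ _ hunion
        · rw [hinter, Finset.prod_singleton]
end

section
/- Let a, b ≥ 2 be coprime integers and let P ∈ ℤ[X] be the polynomial P = ((X^(ab) − 1)(X − 1)) / ((X^a − 1)(X^b − 1)). Then P has degree (a − 1)(b − 1), its constant coefficient equals 1, its leading coefficient equals 1, and every coefficient of P lies in {−1, 0, 1}. -/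
open Polynomial

section Aux

variable (a b : ℕ)

/-- indicator that `n = a*i` for some `i < b`. -/
private def uu (n : ℕ) : ℤ := if ∃ i < b, a * i = n then 1 else 0

open scoped Classical in
/-- indicator that `n = a*i + b*j` with `i < b`. -/
private noncomputable def ss (n : ℕ) : ℤ :=
  if ∃ i < b, ∃ j, a * i + b * j = n then 1 else 0

variable {a b}

private lemma ss_cases (n : ℕ) : ss a b n = 0 ∨ ss a b n = 1 := by
  unfold ss; split_ifs <;> simp

private lemma uniq (hab : Nat.Coprime a b) (hb : 0 < b) {i i' j j' : ℕ}
    (hi : i < b) (hi' : i' < b) (h : a * i + b * j = a * i' + b * j') :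
    i = i' ∧ j = j' := by
  have hc : IsCoprime (b : ℤ) (a : ℤ) := Nat.isCoprime_iff_coprime.mpr hab.symm
  have hd : (b : ℤ) ∣ (a : ℤ) * ((i : ℤ) - i') := by
    refine ⟨(j' : ℤ) - j, ?_⟩
    have h' : (a : ℤ) * i + b * j = a * i' + b * j' := by exact_mod_cast h
    ring_nf; ring_nf at h'; linarith
  have hd2 : (b : ℤ) ∣ ((i : ℤ) - i') := hc.dvd_of_dvd_mul_left hd
  have h0 : (i : ℤ) - i' = 0 := by
    refine Int.eq_zero_of_abs_lt_dvd hd2 ?_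
    rw [abs_sub_lt_iff]
    constructor <;> [skip; skip] <;>
      · have := hi; have := hi'
        push_cast; omega
  have hii : i = i' := by omega
  subst hii
  refine ⟨rfl, ?_⟩
  have hbj : b * j = b * j' := by omega
  exact Nat.eq_of_mul_eq_mul_left hb hbj

private lemma ss_eq_uu_of_lt (hn : n < b) : ss a b n = uu a b n := by
  unfold ss uu
  split_ifs with h1 h2 h2 <;> try rfl
  · exfalso; apply h2
    obtain ⟨i, hi, j, hij⟩ := h1
    have hj : j = 0 := by
      rcases Nat.eq_zero_or_pos j with h | h
      · exact h
      · exfalso; have : b ≤ b * j := Nat.le_mul_of_pos_right b h; omega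
    subst hj
    simp only [Nat.mul_zero, Nat.add_zero] at hij
    exact ⟨i, hi, hij⟩
  · exfalso; apply h1
    obtain ⟨i, hi, hij⟩ := h2
    exact ⟨i, hi, 0, by simpa using hij⟩

/-- `s(n+b) = s(n) + u(n+b)`. -/
private lemma ss_add_b (hab : Nat.Coprime a b) (hb : 0 < b) (n : ℕ) :
    ss a b (n + b) = ss a b n + uu a b (n + b) := by
  unfold ss uu
  have hBA : (∃ i < b, ∃ j, a * i + b * j = n) → (∃ i < b, ∃ j, a * i + b * j = n + b) := by
    rintro ⟨i, hi, j, hij⟩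
    exact ⟨i, hi, j + 1, by rw [Nat.mul_succ]; omega⟩
  have hCA : (∃ i < b, a * i = n + b) → (∃ i < b, ∃ j, a * i + b * j = n + b) := by
    rintro ⟨i, hi, hia⟩
    exact ⟨i, hi, 0, by simpa using hia⟩
  have hAD : (∃ i < b, ∃ j, a * i + b * j = n + b) →
      (∃ i < b, ∃ j, a * i + b * j = n) ∨ (∃ i < b, a * i = n + b) := by
    rintro ⟨i, hi, j, hij⟩
    rcases j with _ | j'
    · right; exact ⟨i, hi, by simpa using hij⟩
    · left
      refine ⟨i, hi, j', ?_⟩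
      rw [Nat.mul_succ] at hij
      omega
  have hBC : (∃ i < b, ∃ j, a * i + b * j = n) → (∃ i < b, a * i = n + b) → False := by
    rintro ⟨i, hi, j, hij⟩ ⟨i', hi', hia⟩
    have e1 : a * i + b * (j + 1) = a * i' + b * 0 := by
      rw [Nat.mul_succ]; simp only [Nat.mul_zero, Nat.add_zero]; omega
    have := (uniq hab hb hi hi' e1).2
    omega
  by_cases hB : ∃ i < b, ∃ j, a * i + b * j = n
  · by_cases hC : ∃ i < b, a * i = n + b
    · exact (hBC hB hC).elim
    · rw [if_pos (hBA hB), if_pos hB, if_neg hC]; norm_num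
  · by_cases hC : ∃ i < b, a * i = n + b
    · rw [if_pos (hCA hC), if_neg hB, if_pos hC]; norm_num
    · have hnA : ¬ ∃ i < b, ∃ j, a * i + b * j = n + b := by
        intro hA
        rcases hAD hA with h | h
        exacts [hB h, hC h]
      rw [if_neg hnA, if_neg hB, if_neg hC]; norm_num

/-- `u(n+a) = u(n) - [n = a*(b-1)]`. -/
private lemma uu_add_a (ha : 0 < a) (hb : 0 < b) (n : ℕ) :
    uu a b (n + a) + (if n = a * (b - 1) then 1 else 0) = uu a b n := by
  unfold uu
  have hmul : a * (b - 1) + a = a * b := by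
    have h1 : b - 1 + 1 = b := by omega
    calc a * (b - 1) + a = a * (b - 1 + 1) := by ring
      _ = a * b := by rw [h1]
  have hAB : (∃ i < b, a * i = n + a) → (∃ i < b, a * i = n) := by
    rintro ⟨i, hi, hia⟩
    have hi1 : 1 ≤ i := by
      rcases Nat.eq_zero_or_pos i with h | h
      · subst h; simp at hia; omega
      · exact h
    refine ⟨i - 1, by omega, ?_⟩
    have h2 : a * i = a * (i - 1) + a := by
      have h1 : i - 1 + 1 = i := by omega
      rw [← h1, Nat.mul_succ, h1]
    omega
  have hAE : (∃ i < b, a * i = n + a) → n ≠ a * (b - 1) := by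
    rintro ⟨i, hi, hia⟩ rfl
    have h2 : a * i = a * b := by omega
    have := Nat.eq_of_mul_eq_mul_left ha h2
    omega
  have hEB : n = a * (b - 1) → (∃ i < b, a * i = n) := by
    rintro rfl
    exact ⟨b - 1, by omega, rfl⟩
  have hBA : (∃ i < b, a * i = n) → n ≠ a * (b - 1) → (∃ i < b, a * i = n + a) := by
    rintro ⟨i, hi, hia⟩ hE
    have hib : i ≠ b - 1 := by
      rintro rfl; exact hE hia.symm
    exact ⟨i + 1, by omega, by rw [Nat.mul_succ]; omega⟩
  by_cases hE : n = a * (b - 1)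
  · have hnA : ¬ ∃ i < b, a * i = n + a := fun hA => hAE hA hE
    rw [if_pos hE, if_pos (hEB hE), if_neg hnA]; norm_num
  · rw [if_neg hE]
    by_cases hB : ∃ i < b, a * i = n
    · rw [if_pos hB, if_pos (hBA hB hE), add_zero]
    · have hnA : ¬ ∃ i < b, a * i = n + a := fun hA => hB (hAB hA)
      rw [if_neg hB, if_neg hnA]; norm_num

/-- every `n ≥ (a-1)*(b-1)` is representable with `i < b`. -/
private lemma rep_of_ge (hab : Nat.Coprime a b) (ha : 2 ≤ a) (hb : 2 ≤ b) {n : ℕ}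
    (hn : (a - 1) * (b - 1) ≤ n) : ∃ i < b, ∃ j, a * i + b * j = n := by
  haveI : NeZero b := ⟨by omega⟩
  set u : (ZMod b)ˣ := ZMod.unitOfCoprime a hab with hu
  set i : ℕ := (((u⁻¹ : (ZMod b)ˣ) : ZMod b) * (n : ZMod b)).val with hidef
  have hib : i < b := ZMod.val_lt _
  have hmod : ((a * i : ℕ) : ZMod b) = (n : ZMod b) := by
    push_cast
    rw [hidef, ZMod.natCast_val, ZMod.cast_id, ← mul_assoc]
    have h1 : ((a : ZMod b)) * ((u⁻¹ : (ZMod b)ˣ) : ZMod b) = 1 := by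
      rw [← ZMod.coe_unitOfCoprime a hab, ← hu]
      exact_mod_cast u.mul_inv
    rw [h1, one_mul]
  have hdvd : (b : ℤ) ∣ (n : ℤ) - (a * i : ℕ) := by
    rw [← ZMod.intCast_zmod_eq_zero_iff_dvd]
    push_cast
    rw [sub_eq_zero]
    exact_mod_cast hmod.symm
  -- bound: a * i ≤ n
  have key : (a - 1) * (b - 1) + (b - 1) = a * (b - 1) := by
    have h1 : a - 1 + 1 = a := by omega
    calc (a - 1) * (b - 1) + (b - 1) = (a - 1 + 1) * (b - 1) := by ring
      _ = a * (b - 1) := by rw [h1]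
  have hle : a * i ≤ n := by
    by_contra hlt
    push_neg at hlt
    have h1 : a * i ≤ a * (b - 1) := Nat.mul_le_mul_left a (by omega)
    have h0 : (n : ℤ) - (a * i : ℕ) = 0 := by
      refine Int.eq_zero_of_abs_lt_dvd hdvd ?_
      rw [abs_lt]
      constructor <;> push_cast <;> omega
    omega
  have hdvdN : b ∣ n - a * i := by
    have : ((n - a * i : ℕ) : ℤ) = (n : ℤ) - (a * i : ℕ) := by
      push_cast [Nat.cast_sub hle]; ring
    exact_mod_cast (this ▸ hdvd : (b : ℤ) ∣ ((n - a * i : ℕ) : ℤ))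
  obtain ⟨k, hk⟩ := hdvdN
  exact ⟨i, hib, k, by omega⟩

/-- `a*b - a - b` is not representable. -/
private lemma not_rep (hab : Nat.Coprime a b) (ha : 2 ≤ a) (hb : 2 ≤ b) :
    ¬ ∃ i < b, ∃ j, a * i + b * j = a * b - a - b := by
  rintro ⟨i, hi, j, hij⟩
  have hba : a + b ≤ a * b := by
    have h : ((a : ℤ) + b ≤ (a : ℤ) * b) := by
      have h2 : (0:ℤ) ≤ ((a:ℤ) - 2) * ((b:ℤ) - 2) := by
        apply mul_nonneg <;> [skip; skip] <;> · push_cast; omega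
      nlinarith
    exact_mod_cast h
  have heq : a * (i + 1) + b * (j + 1) = a * b := by
    have h1 : a * (i + 1) = a * i + a := by ring
    have h2 : b * (j + 1) = b * j + b := by ring
    omega
  have hc : IsCoprime (b : ℤ) (a : ℤ) := Nat.isCoprime_iff_coprime.mpr hab.symm
  have hd : (b : ℤ) ∣ (a : ℤ) * (i + 1) := by
    refine ⟨(a : ℤ) - (j + 1), ?_⟩
    have h' : (a : ℤ) * (i + 1) + b * (j + 1) = a * b := by exact_mod_cast heq
    ring_nf; ring_nf at h'; linarith
  have hd2 : (b : ℤ) ∣ ((i : ℤ) + 1) := hc.dvd_of_dvd_mul_left hd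
  have hd3 : b ∣ (i + 1) := by exact_mod_cast hd2
  have hbi : b ≤ i + 1 := Nat.le_of_dvd (by omega) hd3
  have : i + 1 = b := by omega
  rw [this] at heq
  have hba2 : a * b = b * a := by ring
  have : b * (j + 1) = 0 := by omega
  have : b * (j + 1) ≥ b := Nat.le_mul_of_pos_right b (by omega)
  omega

end Aux

private lemma key_rep (a b : ℕ) (ha : 2 ≤ a) (hb : 2 ≤ b) (hab : Nat.Coprime a b)
    (P : ℤ[X])
    (hP : ((X : ℤ[X]) ^ a - 1) * ((X : ℤ[X]) ^ b - 1) * P =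
      ((X : ℤ[X]) ^ (a * b) - 1) * ((X : ℤ[X]) - 1)) :
    ∀ k : ℕ, P.coeff k = ss a b k - (if k = 0 then 0 else ss a b (k - 1)) := by
  have hb0 : 0 < b := by omega
  have ha0 : 0 < a := by omega
  set S : PowerSeries ℤ := PowerSeries.mk (ss a b) with hS
  set U : PowerSeries ℤ := PowerSeries.mk (uu a b) with hU
  have h1 : ((1 : PowerSeries ℤ) - PowerSeries.X ^ b) * S = U := by
    ext n
    rw [sub_mul, one_mul, map_sub, PowerSeries.coeff_X_pow_mul', hS, hU,
      PowerSeries.coeff_mk, PowerSeries.coeff_mk]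
    split_ifs with h
    · obtain ⟨m, rfl⟩ : ∃ m, n = m + b := ⟨n - b, by omega⟩
      rw [Nat.add_sub_cancel, PowerSeries.coeff_mk]
      have := ss_add_b hab hb0 m
      linarith
    · rw [sub_zero]
      have hnb : n < b := by omega
      rw [PowerSeries.coeff_mk]
      exact ss_eq_uu_of_lt (a := a) hnb
  have h2 : ((1 : PowerSeries ℤ) - PowerSeries.X ^ a) * U = 1 - PowerSeries.X ^ (a * b) := by
    ext n
    rw [sub_mul, one_mul, map_sub, map_sub, PowerSeries.coeff_X_pow_mul', hU,
      PowerSeries.coeff_mk, PowerSeries.coeff_one, PowerSeries.coeff_X_pow]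
    have hmul2 : a * (b - 1) + a = a * b := by
      have hx : b - 1 + 1 = b := by omega
      calc a * (b - 1) + a = a * (b - 1 + 1) := by ring
        _ = a * b := by rw [hx]
    have haab : a ≤ a * b := Nat.le_mul_of_pos_right a hb0
    by_cases h : a ≤ n
    · obtain ⟨m, rfl⟩ : ∃ m, n = m + a := ⟨n - a, by omega⟩
      rw [if_pos h, Nat.add_sub_cancel, PowerSeries.coeff_mk,
        if_neg (show ¬ m + a = 0 by omega)]
      have key := uu_add_a ha0 hb0 m
      by_cases hmb : m + a = a * b
      · rw [if_pos hmb]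
        rw [if_pos (show m = a * (b - 1) by omega)] at key
        linarith
      · rw [if_neg hmb]
        rw [if_neg (show ¬ m = a * (b - 1) by omega)] at key
        linarith
    · rw [if_neg h, sub_zero]
      by_cases h0 : n = 0
      · subst h0
        rw [if_pos rfl, if_neg (show ¬ (0:ℕ) = a * b by omega), sub_zero]
        unfold uu
        rw [if_pos ⟨0, hb0, by simp⟩]
      · rw [if_neg h0, if_neg (show ¬ n = a * b by omega), sub_zero]
        unfold uu
        rw [if_neg]
        rintro ⟨i, hi, hia⟩
        rcases Nat.eq_zero_or_pos i with h0i | h0i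
        · subst h0i; simp at hia; omega
        · have : a ≤ a * i := Nat.le_mul_of_pos_right a h0i
          omega
  -- transfer hP to power series
  have hP2 : ((PowerSeries.X : PowerSeries ℤ) ^ a - 1) * ((PowerSeries.X : PowerSeries ℤ) ^ b - 1) * ↑P =
      ((PowerSeries.X : PowerSeries ℤ) ^ (a * b) - 1) * ((PowerSeries.X : PowerSeries ℤ) - 1) := by
    have := congrArg (fun q : ℤ[X] => (q : PowerSeries ℤ)) hP
    simpa only [Polynomial.coe_mul, Polynomial.coe_sub, Polynomial.coe_pow,
      Polynomial.coe_X, Polynomial.coe_one] using this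
  have hSU : ((1 : PowerSeries ℤ) - PowerSeries.X ^ a) * (((1 : PowerSeries ℤ) - PowerSeries.X ^ b) * S) =
      1 - PowerSeries.X ^ (a * b) := by rw [h1, h2]
  have hna : ((1 : PowerSeries ℤ) - PowerSeries.X ^ a) ≠ 0 := by
    intro h
    have := congrArg (PowerSeries.constantCoeff (R := ℤ)) h
    simp [zero_pow (show a ≠ 0 by omega)] at this
  have hnb : ((1 : PowerSeries ℤ) - PowerSeries.X ^ b) ≠ 0 := by
    intro h
    have := congrArg (PowerSeries.constantCoeff (R := ℤ)) h
    simp [zero_pow (show b ≠ 0 by omega)] at this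
  have hmain : ((1 : PowerSeries ℤ) - PowerSeries.X ^ a) * ((1 - PowerSeries.X ^ b) *
      (P : PowerSeries ℤ)) = (1 - PowerSeries.X ^ a) * ((1 - PowerSeries.X ^ b) *
      ((1 - PowerSeries.X) * S)) := by
    linear_combination hP2 - (1 - PowerSeries.X) * hSU
  have hPS : (P : PowerSeries ℤ) = (1 - PowerSeries.X) * S := by
    have := mul_left_cancel₀ hna hmain
    exact mul_left_cancel₀ hnb this
  intro k
  have := congrArg (PowerSeries.coeff (R := ℤ) k) hPS
  rw [Polynomial.coeff_coe, sub_mul, one_mul, map_sub, hS, PowerSeries.coeff_mk] at this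
  rcases Nat.eq_zero_or_pos k with hk | hk
  · subst hk
    rw [this, PowerSeries.coeff_zero_X_mul, if_pos rfl]
  · obtain ⟨m, rfl⟩ : ∃ m, k = m + 1 := ⟨k - 1, by omega⟩
    rw [this, PowerSeries.coeff_succ_X_mul, if_neg (by omega), PowerSeries.coeff_mk,
      Nat.add_sub_cancel]

/-- For coprime `a, b ≥ 2`, the quotient
`P = ((X^(ab) - 1)(X - 1)) / ((X^a - 1)(X^b - 1))` in `ℤ[X]` has degree
`(a-1)(b-1)`, constant coefficient `1`, leading coefficient `1`, and all
coefficients in `{-1, 0, 1}`. -/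
theorem stmt_11 (a b : ℕ) (ha : 2 ≤ a) (hb : 2 ≤ b) (hab : Nat.Coprime a b)
    (P : ℤ[X])
    (hP : ((X : ℤ[X]) ^ a - 1) * ((X : ℤ[X]) ^ b - 1) * P =
      ((X : ℤ[X]) ^ (a * b) - 1) * ((X : ℤ[X]) - 1)) :
    P.natDegree = (a - 1) * (b - 1) ∧ P.coeff 0 = 1 ∧ P.leadingCoeff = 1 ∧
      ∀ k : ℕ, P.coeff k ∈ ({-1, 0, 1} : Set ℤ) := by
  have hcoeff := key_rep a b ha hb hab P hP
  have hb0 : 0 < b := by omega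
  set D := (a - 1) * (b - 1) with hD
  have hDval : D = a * b - a - b + 1 := by
    have h1 : a - 1 + 1 = a := by omega
    have h2 : b - 1 + 1 = b := by omega
    have hab2 : a + b ≤ a * b := by
      have h : ((a : ℤ) + b ≤ (a : ℤ) * b) := by
        have h2 : (0:ℤ) ≤ ((a:ℤ) - 2) * ((b:ℤ) - 2) := by
          apply mul_nonneg <;> [skip; skip] <;> · push_cast; omega
        nlinarith
      exact_mod_cast h
    have h3 : (a - 1 + 1) * (b - 1 + 1) = (a-1)*(b-1) + (a-1) + (b-1) + 1 := by ring
    rw [h1, h2] at h3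
    omega
  have hD1 : 1 ≤ D := by omega
  have hs_ge : ∀ n, D ≤ n → ss a b n = 1 := by
    intro n hn
    unfold ss
    rw [if_pos (rep_of_ge hab ha hb hn)]
  have hsD1 : ss a b (D - 1) = 0 := by
    unfold ss
    rw [if_neg]
    have : D - 1 = a * b - a - b := by omega
    rw [this]
    exact not_rep hab ha hb
  have hcD : P.coeff D = 1 := by
    rw [hcoeff, if_neg (by omega), hs_ge D le_rfl, hsD1, sub_zero]
  have hczero : ∀ N, D < N → P.coeff N = 0 := by
    intro N hN
    rw [hcoeff, if_neg (by omega), hs_ge N (by omega), hs_ge (N - 1) (by omega), sub_self]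
  have hdeg : P.natDegree = D := by
    refine le_antisymm (natDegree_le_iff_coeff_eq_zero.mpr hczero) ?_
    exact le_natDegree_of_ne_zero (by rw [hcD]; norm_num)
  refine ⟨hdeg, ?_, ?_, ?_⟩
  · rw [hcoeff, if_pos rfl, sub_zero]
    unfold ss
    rw [if_pos ⟨0, hb0, 0, by omega⟩]
  · rw [Polynomial.leadingCoeff, hdeg, hcD]
  · intro k
    rw [hcoeff]
    rcases ss_cases (a := a) (b := b) k with h1 | h1 <;>
      rcases ss_cases (a := a) (b := b) (k - 1) with h2 | h2 <;>
      rw [h1, h2] <;> split_ifs <;> simp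
end

section
/- Let a, b ≥ 2 be coprime integers and let P ∈ ℤ[X] be the polynomial P = ((X^(ab) − 1)(X − 1)) / ((X^a − 1)(X^b − 1)). Then the nonzero coefficients of P alternate in sign: whenever i < j are indices with P.coeff(i) ≠ 0, P.coeff(j) ≠ 0, and P.coeff(k) = 0 for all k with i < k < j, one has P.coeff(i) = −P.coeff(j). -/
open Polynomial

namespace Stmt12Aux

/-- membership in the numerical semigroup generated by `a, b`, as integers -/
def Mem (a b : ℕ) (m : ℤ) : Prop := ∃ u v : ℕ, (u:ℤ)*a + (v:ℤ)*b = m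

open scoped Classical in
noncomputable def chi (a b : ℕ) (m : ℤ) : ℤ := if Mem a b m then 1 else 0

lemma chi_cases (a b : ℕ) (m : ℤ) : chi a b m = 0 ∨ chi a b m = 1 := by
  unfold chi; split <;> simp

lemma Mem.nonneg {a b : ℕ} {m : ℤ} (h : Mem a b m) : 0 ≤ m := by
  obtain ⟨u, v, h⟩ := h; subst h; positivity

lemma chi_neg {a b : ℕ} {m : ℤ} (h : m < 0) : chi a b m = 0 := by
  unfold chi
  rw [if_neg]
  intro hm
  exact absurd hm.nonneg (not_le.2 h)

lemma chi_of_mem {a b : ℕ} {m : ℤ} (h : Mem a b m) : chi a b m = 1 := by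
  unfold chi; rw [if_pos h]

lemma chi_of_not_mem {a b : ℕ} {m : ℤ} (h : ¬ Mem a b m) : chi a b m = 0 := by
  unfold chi; rw [if_neg h]

lemma Mem.add_a {a b : ℕ} {m : ℤ} (h : Mem a b m) : Mem a b (m + a) := by
  obtain ⟨u, v, h⟩ := h
  exact ⟨u + 1, v, by push_cast; linarith⟩

lemma Mem.add_b {a b : ℕ} {m : ℤ} (h : Mem a b m) : Mem a b (m + b) := by
  obtain ⟨u, v, h⟩ := h
  exact ⟨u, v + 1, by push_cast; linarith⟩

lemma mem_of_sub_a {a b : ℕ} {m : ℤ} (h : Mem a b (m - a)) : Mem a b m := by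
  have := h.add_a; simpa using this

lemma mem_of_sub_b {a b : ℕ} {m : ℤ} (h : Mem a b (m - b)) : Mem a b m := by
  have := h.add_b; simpa using this

/-- Every integer `≥ (a-1)(b-1)` is in the semigroup. -/
lemma mem_of_big {a b : ℕ} (ha : 2 ≤ a) (hb : 2 ≤ b) (hab : Nat.Coprime a b)
    {m : ℤ} (hm : ((a:ℤ) - 1) * ((b:ℤ) - 1) ≤ m) : Mem a b m := by
  have hb0 : (0:ℤ) < b := by exact_mod_cast (by omega : 0 < b)
  have ha0 : (0:ℤ) < a := by exact_mod_cast (by omega : 0 < a)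
  have hbez : (1:ℤ) = a * Nat.gcdA a b + b * Nat.gcdB a b := by
    have := Nat.gcd_eq_gcd_ab a b
    rwa [hab] at this
  set x := Nat.gcdA a b with hx
  set y := Nat.gcdB a b with hy
  set u0 : ℤ := (m * x) % b with hu0
  set q : ℤ := (m * x) / b with hq
  have hdm : (b:ℤ) * q + u0 = m * x := Int.mul_ediv_add_emod _ _
  have hu0nn : 0 ≤ u0 := Int.emod_nonneg _ (ne_of_gt hb0)
  have hu0lt : u0 < b := Int.emod_lt_of_pos _ hb0
  set t : ℤ := m * y + a * q with ht
  have hkey : (a:ℤ) * u0 + b * t = m := by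
    have : u0 = m * x - b * q := by linarith
    rw [this, ht]
    linear_combination -m * hbez
  have htnn : 0 ≤ t := by
    by_contra h
    push_neg at h
    have h1 : t ≤ -1 := by omega
    have h2 : (b:ℤ) * t ≤ b * (-1) := by
      exact mul_le_mul_of_nonneg_left h1 (le_of_lt hb0)
    have h3 : (a:ℤ) * u0 ≤ a * (b - 1) := by
      have : u0 ≤ b - 1 := by omega
      exact mul_le_mul_of_nonneg_left this (le_of_lt ha0)
    nlinarith
  exact ⟨u0.toNat, t.toNat, by
    rw [Int.toNat_of_nonneg hu0nn, Int.toNat_of_nonneg htnn]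
    linarith [hkey]⟩

/-- The Frobenius number `ab - a - b` is not in the semigroup. -/
lemma frob_not_mem {a b : ℕ} (ha : 2 ≤ a) (hb : 2 ≤ b) (hab : Nat.Coprime a b) :
    ¬ Mem a b ((a:ℤ) * b - a - b) := by
  rintro ⟨u, v, h⟩
  have hnat : (u + 1) * a + (v + 1) * b = a * b := by
    have : ((u:ℤ) + 1) * a + ((v:ℤ) + 1) * b = a * b := by linarith
    exact_mod_cast this
  have hda : a ∣ (v + 1) * b := by
    have h1 : a ∣ a * b := dvd_mul_right a b
    have h2 : a ∣ (u + 1) * a := dvd_mul_left a (u+1)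
    have : (v+1) * b = a * b - (u+1) * a := by omega
    rw [this]; exact Nat.dvd_sub h1 h2
  have hdb : b ∣ (u + 1) * a := by
    have h1 : b ∣ a * b := dvd_mul_left b a
    have h2 : b ∣ (v + 1) * b := dvd_mul_left b (v+1)
    have : (u+1) * a = a * b - (v+1) * b := by omega
    rw [this]; exact Nat.dvd_sub h1 h2
  have hva : a ∣ v + 1 := hab.dvd_of_dvd_mul_right hda
  have hub : b ∣ u + 1 := (hab.symm).dvd_of_dvd_mul_right hdb
  have h1 : a ≤ v + 1 := Nat.le_of_dvd (by omega) hva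
  have h2 : b ≤ u + 1 := Nat.le_of_dvd (by omega) hub
  nlinarith

/-- The key identity for the indicator of the numerical semigroup. -/
lemma key {a b : ℕ} (ha : 2 ≤ a) (hb : 2 ≤ b) (hab : Nat.Coprime a b) (m : ℤ) :
    chi a b m - chi a b (m - a) - chi a b (m - b) + chi a b (m - a - b)
      = (if m = 0 then 1 else 0) - (if m = (a:ℤ) * b then 1 else 0) := by
  have ha0 : (0:ℤ) < a := by exact_mod_cast (by omega : 0 < a)
  have hb0 : (0:ℤ) < b := by exact_mod_cast (by omega : 0 < b)
  by_cases hm0 : m = 0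
  · subst hm0
    rw [chi_of_mem ⟨0, 0, by push_cast; ring⟩, chi_neg (by linarith), chi_neg (by linarith),
      chi_neg (by linarith), if_pos rfl, if_neg (by nlinarith)]
    ring
  · by_cases hmab : m = (a:ℤ) * b
    · subst hmab
      rw [chi_of_mem ⟨b, 0, by push_cast; ring⟩,
        chi_of_mem ⟨b - 1, 0, by push_cast [Nat.cast_sub (by omega : 1 ≤ b)]; ring⟩,
        chi_of_mem ⟨0, a - 1, by push_cast [Nat.cast_sub (by omega : 1 ≤ a)]; ring⟩,
        chi_of_not_mem (frob_not_mem ha hb hab), if_neg (by nlinarith), if_pos rfl]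
      ring
    · rw [if_neg hm0, if_neg hmab]
      by_cases hA : Mem a b m
      · by_cases hD : Mem a b (m - a - b)
        · have hB : Mem a b (m - a) := by
            have := hD.add_b; simpa [sub_add_cancel] using this
          have hC : Mem a b (m - b) := by
            have : Mem a b (m - b - a) := by
              have : m - a - b = m - b - a := by ring
              rwa [this] at hD
            have := this.add_a; simpa [sub_add_cancel] using this
          rw [chi_of_mem hA, chi_of_mem hB, chi_of_mem hC, chi_of_mem hD]; ring
        · -- exactly one of m - a, m - b is in S
          have hnotboth : ¬ (Mem a b (m - a) ∧ Mem a b (m - b)) := by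
            rintro ⟨hB, hC⟩
            -- from hB and ¬hD : m is a multiple of a
            have hma : (a:ℤ) ∣ m := by
              obtain ⟨u, v, huv⟩ := hB
              rcases Nat.eq_zero_or_pos v with hv | hv
              · subst hv
                exact ⟨u + 1, by push_cast at huv ⊢; linarith⟩
              · exfalso
                apply hD
                exact ⟨u, v - 1, by push_cast [Nat.cast_sub hv]; linarith⟩
            have hmb : (b:ℤ) ∣ m := by
              obtain ⟨u, v, huv⟩ := hC
              rcases Nat.eq_zero_or_pos u with hu | hu
              · subst hu
                exact ⟨v + 1, by push_cast at huv ⊢; linarith⟩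
              · exfalso
                apply hD
                have : Mem a b (m - b - a) := ⟨u - 1, v, by push_cast [Nat.cast_sub hu]; linarith⟩
                have h2 : m - a - b = m - b - a := by ring
                rwa [h2]
            have hcop : IsCoprime (a:ℤ) (b:ℤ) := by
              rw [Int.isCoprime_iff_gcd_eq_one]
              simpa using hab
            have hmab2 : (a:ℤ) * b ∣ m := hcop.mul_dvd hma hmb
            obtain ⟨c, hc⟩ := hmab2
            have hmpos : 0 < m := lt_of_le_of_ne hA.nonneg (Ne.symm hm0)
            have hc1 : 1 ≤ c := by
              by_contra h
              push_neg at h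
              have h0 : c ≤ 0 := by omega
              have := mul_nonpos_of_nonneg_of_nonpos (le_of_lt (mul_pos ha0 hb0)) h0
              rw [← hc] at this; linarith
            have hc2 : c ≠ 1 := by rintro rfl; simp at hc; exact hmab (by linarith)
            have hc3 : 2 ≤ c := by omega
            apply hD
            apply mem_of_big ha hb hab
            have : 2 * ((a:ℤ) * b) ≤ m := by nlinarith
            nlinarith
          have hone : Mem a b (m - a) ∨ Mem a b (m - b) := by
            obtain ⟨u, v, huv⟩ := hA
            rcases Nat.eq_zero_or_pos v with hv | hv
            · subst hv
              rcases Nat.eq_zero_or_pos u with hu | hu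
              · exfalso; apply hm0; subst hu; push_cast at huv; linarith
              · left; exact ⟨u - 1, 0, by push_cast [Nat.cast_sub hu] at huv ⊢; linear_combination huv⟩
            · right; exact ⟨u, v - 1, by push_cast [Nat.cast_sub hv] at huv ⊢; linear_combination huv⟩
          rcases hone with hB | hC
          · have hC : ¬ Mem a b (m - b) := fun hC => hnotboth ⟨hB, hC⟩
            rw [chi_of_mem hA, chi_of_mem hB, chi_of_not_mem hC, chi_of_not_mem hD]; ring
          · have hB : ¬ Mem a b (m - a) := fun hB => hnotboth ⟨hB, hC⟩
            rw [chi_of_mem hA, chi_of_not_mem hB, chi_of_mem hC, chi_of_not_mem hD]; ring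
      · have hB : ¬ Mem a b (m - a) := fun h => hA (mem_of_sub_a h)
        have hC : ¬ Mem a b (m - b) := fun h => hA (mem_of_sub_b h)
        have hD : ¬ Mem a b (m - a - b) := fun h => hB (mem_of_sub_b (by
          have : m - a - b = m - a - b := rfl
          exact h))
        rw [chi_of_not_mem hA, chi_of_not_mem hB, chi_of_not_mem hC, chi_of_not_mem hD]; ring

end Stmt12Aux

open Stmt12Aux

/-- For coprime `a, b ≥ 2` and
`P = ((X^(ab) - 1)(X - 1)) / ((X^a - 1)(X^b - 1))` in `ℤ[X]`, the nonzero
coefficients of `P` alternate in sign. -/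
theorem stmt_12 (a b : ℕ) (ha : 2 ≤ a) (hb : 2 ≤ b) (hab : Nat.Coprime a b)
    (P : ℤ[X])
    (hP : ((X : ℤ[X]) ^ a - 1) * ((X : ℤ[X]) ^ b - 1) * P =
      ((X : ℤ[X]) ^ (a * b) - 1) * ((X : ℤ[X]) - 1)) :
    ∀ i j : ℕ, i < j → P.coeff i ≠ 0 → P.coeff j ≠ 0 →
      (∀ k : ℕ, i < k → k < j → P.coeff k = 0) →
      P.coeff i = -P.coeff j := by
  classical
  have ha0 : (0:ℤ) < a := by exact_mod_cast (by omega : 0 < a)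
  have hb0 : (0:ℤ) < b := by exact_mod_cast (by omega : 0 < b)
  set F : PowerSeries ℤ := PowerSeries.mk fun n => chi a b n with hFdef
  -- helper to convert guarded nat-sub chi values
  have hguard : ∀ (k n : ℕ), (if k ≤ n then chi a b ((n - k : ℕ) : ℤ) else 0)
      = chi a b ((n:ℤ) - k) := by
    intro k n
    split
    · congr 1
      push_cast [Nat.cast_sub ‹k ≤ n›]
      ring
    · rw [chi_neg]
      have : (n:ℤ) < k := by exact_mod_cast (by omega : n < k)
      linarith
  have hF : ((1 : PowerSeries ℤ) - (PowerSeries.X)^a) * (1 - PowerSeries.X^b) * F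
      = 1 - PowerSeries.X^(a*b) := by
    have hexp : ((1 : PowerSeries ℤ) - (PowerSeries.X)^a) * (1 - PowerSeries.X^b) * F
        = F - F * PowerSeries.X^a - F * PowerSeries.X^b
          + F * PowerSeries.X^a * PowerSeries.X^b := by ring
    rw [hexp]
    ext n
    rw [map_add, map_sub, map_sub, map_sub, mul_assoc, ← pow_add,
      PowerSeries.coeff_mul_X_pow', PowerSeries.coeff_mul_X_pow',
      PowerSeries.coeff_mul_X_pow']
    simp only [hFdef, PowerSeries.coeff_mk]
    rw [hguard, hguard, hguard]
    have hsub : (n:ℤ) - (a + b : ℕ) = (n:ℤ) - a - b := by push_cast; ring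
    rw [hsub, key ha hb hab n, PowerSeries.coeff_one, PowerSeries.coeff_X_pow]
    have e1 : ((n:ℤ) = 0) ↔ (n = 0) := by exact_mod_cast Iff.rfl
    have e2 : ((n:ℤ) = (a:ℤ) * b) ↔ (n = a * b) := by exact_mod_cast Iff.rfl
    simp only [e1, e2]
  have h2 : (((X : ℤ[X]) ^ a - 1) * ((X : ℤ[X]) ^ b - 1) * P : ℤ[X]) =
      (((X : ℤ[X]) ^ (a * b) - 1) * ((X : ℤ[X]) - 1) : ℤ[X]) := hP
  have h2' : ((PowerSeries.X : PowerSeries ℤ)^a - 1) * (PowerSeries.X^b - 1) * (P : PowerSeries ℤ)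
      = (PowerSeries.X^(a*b) - 1) * (PowerSeries.X - 1) := by
    have := congrArg (fun p : ℤ[X] => (p : PowerSeries ℤ)) h2
    simpa [Polynomial.coe_mul, Polynomial.coe_sub, Polynomial.coe_pow, Polynomial.coe_X,
      Polynomial.coe_one] using this
  have h3 : ((PowerSeries.X : PowerSeries ℤ)^a - 1) * (PowerSeries.X^b - 1) * (P : PowerSeries ℤ)
      = ((PowerSeries.X : PowerSeries ℤ)^a - 1) * (PowerSeries.X^b - 1)
        * (F * (1 - PowerSeries.X)) := by
    rw [h2']
    calc (PowerSeries.X^(a*b) - 1) * (PowerSeries.X - 1)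
        = (1 - PowerSeries.X^(a*b)) * (1 - PowerSeries.X) := by ring
      _ = (((1 : PowerSeries ℤ) - (PowerSeries.X)^a) * (1 - PowerSeries.X^b) * F)
            * (1 - PowerSeries.X) := by rw [hF]
      _ = ((PowerSeries.X : PowerSeries ℤ)^a - 1) * (PowerSeries.X^b - 1)
            * (F * (1 - PowerSeries.X)) := by ring
  have hne : ((PowerSeries.X : PowerSeries ℤ)^a - 1) * (PowerSeries.X^b - 1) ≠ 0 := by
    intro h
    have := congrArg (PowerSeries.constantCoeff) h
    simp only [map_mul, map_sub, map_pow, PowerSeries.constantCoeff_X, map_one,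
      map_zero] at this
    rw [zero_pow (by omega : a ≠ 0), zero_pow (by omega : b ≠ 0)] at this
    norm_num at this
  have hPF : (P : PowerSeries ℤ) = F * (1 - PowerSeries.X) := mul_left_cancel₀ hne h3
  have coeffP : ∀ n : ℕ, P.coeff n = chi a b n - chi a b ((n:ℤ) - 1) := by
    intro n
    have := congrArg (PowerSeries.coeff n) hPF
    rw [Polynomial.coeff_coe] at this
    rw [this, mul_sub, mul_one, map_sub]
    have hx : (F * PowerSeries.X) = F * PowerSeries.X ^ 1 := by rw [pow_one]
    rw [hx, PowerSeries.coeff_mul_X_pow', PowerSeries.coeff_mk]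
    rw [show (if 1 ≤ n then (PowerSeries.coeff (n-1)) F else 0)
        = (if 1 ≤ n then chi a b ((n-1 : ℕ):ℤ) else 0) from by
      split <;> simp [hFdef, PowerSeries.coeff_mk]]
    rw [hguard 1 n]
    norm_num
  intro i j hij hi hj hmid
  -- chi is constant on [i, j-1]
  have hconst : ∀ d : ℕ, i + d < j → chi a b ((i + d : ℕ) : ℤ) = chi a b (i : ℤ) := by
    intro d
    induction d with
    | zero => simp
    | succ d ih =>
      intro hd
      show chi a b ((i + d + 1 : ℕ) : ℤ) = chi a b (i : ℤ)
      have hd' : i + d < j := by omega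
      have hc : P.coeff (i + d + 1) = 0 := hmid _ (by omega) (by omega)
      rw [coeffP] at hc
      have hcast : ((i + d + 1 : ℕ) : ℤ) - 1 = ((i + d : ℕ) : ℤ) := by push_cast; ring
      rw [hcast] at hc
      have : chi a b ((i + d + 1 : ℕ) : ℤ) = chi a b ((i + d : ℕ) : ℤ) := by linarith
      rw [this, ih hd']
  have hj1 : chi a b (((j - 1 : ℕ)) : ℤ) = chi a b (i : ℤ) := by
    have : j - 1 = i + (j - 1 - i) := by omega
    rw [this]
    exact hconst _ (by omega)
  rw [coeffP] at hi hj ⊢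
  rw [coeffP]
  have hcastj : ((j:ℤ) - 1) = ((j - 1 : ℕ) : ℤ) := by
    have : 1 ≤ j := by omega
    push_cast [Nat.cast_sub this]; ring
  rw [hcastj, hj1] at hj ⊢
  rcases chi_cases a b (i:ℤ) with h1 | h1 <;>
    rcases chi_cases a b ((i:ℤ) - 1) with h2 | h2 <;>
      rcases chi_cases a b (j:ℤ) with h3 | h3 <;>
        omega
end

section
/- Let a, b ≥ 2 be coprime integers, let P ∈ ℤ[X] be the polynomial P = ((X^(ab) − 1)(X − 1)) / ((X^a − 1)(X^b − 1)), and set d = (a − 1)(b − 1). Then P is palindromic: P.coeff(j) = P.coeff(d − j) for every 0 ≤ j ≤ d. -/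
open Polynomial

lemma rev_xpow_sub_one (n : ℕ) (hn : 1 ≤ n) :
    reverse ((X : ℤ[X]) ^ n - 1) = 1 - (X : ℤ[X]) ^ n := by
  have hdeg : ((X : ℤ[X]) ^ n - 1).natDegree = n := by
    simpa using natDegree_X_pow_sub_C (n := n) (r := (1 : ℤ))
  have h1 : (1 : ℤ[X]) = X ^ 0 := by simp
  rw [reverse, hdeg, h1, reflect_sub, reflect_monomial, reflect_monomial,
    revAt_le (le_refl n), revAt_le (Nat.zero_le n)]
  simp

/-- For coprime `a, b ≥ 2` and
`P = ((X^(ab) - 1)(X - 1)) / ((X^a - 1)(X^b - 1))` in `ℤ[X]` with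
`d = (a-1)(b-1)`, the polynomial `P` is palindromic:
`P.coeff j = P.coeff (d - j)` for all `0 ≤ j ≤ d`. -/
theorem stmt_13 (a b : ℕ) (ha : 2 ≤ a) (hb : 2 ≤ b) (hab : Nat.Coprime a b)
    (P : ℤ[X])
    (hP : ((X : ℤ[X]) ^ a - 1) * ((X : ℤ[X]) ^ b - 1) * P =
      ((X : ℤ[X]) ^ (a * b) - 1) * ((X : ℤ[X]) - 1))
    (d : ℕ) (hd : d = (a - 1) * (b - 1)) :
    ∀ j : ℕ, j ≤ d → P.coeff j = P.coeff (d - j) := by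
  have hdegn : ∀ n : ℕ, 1 ≤ n → ((X : ℤ[X]) ^ n - 1).natDegree = n := fun n hn => by
    simpa using natDegree_X_pow_sub_C (n := n) (r := (1 : ℤ))
  have hne : ∀ n : ℕ, 1 ≤ n → ((X : ℤ[X]) ^ n - 1) ≠ 0 := fun n hn h => by
    have := hdegn n hn
    rw [h] at this
    simp at this
    omega
  have ha1 : 1 ≤ a := by omega
  have hb1 : 1 ≤ b := by omega
  have hab1 : 1 ≤ a * b := Nat.one_le_iff_ne_zero.mpr (by positivity)
  have hX1deg : ((X : ℤ[X]) - 1).natDegree = 1 := by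
    simpa using hdegn 1 (le_refl 1)
  have hX1ne : ((X : ℤ[X]) - 1) ≠ 0 := by
    have := hne 1 (le_refl 1); simpa using this
  have hPne : P ≠ 0 := by
    intro h
    rw [h, mul_zero] at hP
    exact mul_ne_zero (hne _ hab1) hX1ne hP.symm
  -- degree of P
  have hdegP : P.natDegree = d := by
    have h1 := congrArg natDegree hP
    rw [natDegree_mul (mul_ne_zero (hne _ ha1) (hne _ hb1)) hPne,
      natDegree_mul (hne _ ha1) (hne _ hb1),
      natDegree_mul (hne _ hab1) hX1ne,
      hdegn a ha1, hdegn b hb1, hdegn (a*b) hab1, hX1deg] at h1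
    have key : (a - 1) * (b - 1) + a + b = a * b + 1 := by
      obtain ⟨a', rfl⟩ := Nat.exists_eq_add_of_le ha
      obtain ⟨b', rfl⟩ := Nat.exists_eq_add_of_le hb
      have e1 : 2 + a' - 1 = a' + 1 := by omega
      have e2 : 2 + b' - 1 = b' + 1 := by omega
      rw [e1, e2]; ring
    omega
  -- reverse P = P
  have hrev : P.reverse = P := by
    have h1 := congrArg reverse hP
    rw [reverse_mul_of_domain, reverse_mul_of_domain, reverse_mul_of_domain,
      rev_xpow_sub_one a ha1, rev_xpow_sub_one b hb1, rev_xpow_sub_one (a*b) hab1] at h1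
    have hX1 : reverse ((X : ℤ[X]) - 1) = 1 - X := by
      have := rev_xpow_sub_one 1 (le_refl 1); simpa using this
    rw [hX1] at h1
    have h2 : ((X : ℤ[X]) ^ a - 1) * ((X : ℤ[X]) ^ b - 1) * P.reverse =
        ((X : ℤ[X]) ^ (a * b) - 1) * ((X : ℤ[X]) - 1) := by
      have : (1 - (X : ℤ[X]) ^ a) * (1 - (X : ℤ[X]) ^ b) =
          ((X : ℤ[X]) ^ a - 1) * ((X : ℤ[X]) ^ b - 1) := by ring
      rw [this] at h1
      rw [h1]; ring
    rw [← hP] at h2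
    exact mul_left_cancel₀ (mul_ne_zero (hne _ ha1) (hne _ hb1)) h2
  intro j hj
  have := congrArg (fun q => Polynomial.coeff q j) hrev
  rw [coeff_reverse, hdegP, revAt_le hj] at this
  exact this.symm
end

section
/- Let a, b ≥ 2 be coprime integers, let P ∈ ℤ[X] be the polynomial P = ((X^(ab) − 1)(X − 1)) / ((X^a − 1)(X^b − 1)), and set d = (a − 1)(b − 1); note d is even. Then the 0-th torsion coefficient t₀ = Σ_{j=1}^{d/2} j · P.coeff(d/2 + j) is strictly positive. -/
open Polynomial Finset

namespace Stmt14

/-- `ii b a' n` is the residue `n * a' mod b`; when `a' ≡ a⁻¹ (mod b)` it is the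
unique `i ∈ [0,b)` with `a*i ≡ n (mod b)`. -/
def ii (b : ℕ) (a' : ℤ) (n : ℤ) : ℤ := (n * a') % (b : ℤ)

/-- indicator of the numerical semigroup generated by `a`, `b`. -/
def qq (a b : ℕ) (a' : ℤ) (n : ℤ) : ℤ := if (a : ℤ) * ii b a' n ≤ n then 1 else 0

def pp (a b : ℕ) (a' : ℤ) (n : ℤ) : ℤ := qq a b a' n - qq a b a' (n - 1)

section

variable {a b : ℕ} {a' : ℤ}

lemma ii_nonneg (hb : 2 ≤ b) (n : ℤ) : 0 ≤ ii b a' n :=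
  Int.emod_nonneg _ (by positivity)

lemma ii_lt (hb : 2 ≤ b) (n : ℤ) : ii b a' n < b :=
  Int.emod_lt_of_pos _ (by positivity)

lemma ii_dvd (ha' : (b : ℤ) ∣ (a * a' - 1)) (n : ℤ) :
    (b : ℤ) ∣ (a : ℤ) * ii b a' n - n := by
  have h : (a : ℤ) * ii b a' n - n
      = (a * a' - 1) * n - (b : ℤ) * ((a : ℤ) * (n * a' / b)) := by
    unfold ii; rw [Int.emod_def]; ring
  rw [h]
  exact dvd_sub (ha'.mul_right n) (dvd_mul_right _ _)

lemma dvd_cancel (ha' : (b : ℤ) ∣ (a * a' - 1)) {x : ℤ}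
    (h : (b : ℤ) ∣ (a : ℤ) * x) : (b : ℤ) ∣ x := by
  have h2 : x = a' * ((a : ℤ) * x) - (a * a' - 1) * x := by ring
  rw [h2]
  exact dvd_sub (h.mul_left a') (ha'.mul_right x)

lemma ii_unique (hb : 2 ≤ b) (ha' : (b : ℤ) ∣ (a * a' - 1)) {n j : ℤ}
    (hj0 : 0 ≤ j) (hjb : j < b) (hjd : (b : ℤ) ∣ (a : ℤ) * j - n) :
    j = ii b a' n := by
  have h1 : (b : ℤ) ∣ (a : ℤ) * (j - ii b a' n) := by
    have := dvd_sub hjd (ii_dvd ha' n)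
    have e : (a : ℤ) * j - n - ((a : ℤ) * ii b a' n - n) = (a:ℤ) * (j - ii b a' n) := by ring
    rwa [e] at this
  have h2 : (b : ℤ) ∣ j - ii b a' n := dvd_cancel ha' h1
  have h3 : j - ii b a' n = 0 := by
    apply Int.eq_zero_of_abs_lt_dvd h2
    have := ii_nonneg (a' := a') hb n
    have := ii_lt (a' := a') hb n
    rw [abs_lt]; omega
  omega

lemma qq_nonneg (n : ℤ) : 0 ≤ qq a b a' n := by unfold qq; split_ifs <;> norm_num

lemma qq_le_one (n : ℤ) : qq a b a' n ≤ 1 := by unfold qq; split_ifs <;> norm_num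

lemma qq_neg (hb : 2 ≤ b) {n : ℤ} (hn : n < 0) : qq a b a' n = 0 := by
  unfold qq
  rw [if_neg]
  have h1 : (0:ℤ) ≤ (a : ℤ) * ii b a' n :=
    mul_nonneg (by positivity) (ii_nonneg hb n)
  omega

lemma qq_big (ha : 2 ≤ a) (hb : 2 ≤ b) (ha' : (b : ℤ) ∣ (a * a' - 1)) {n : ℤ}
    (hn : ((a:ℤ) - 1) * ((b:ℤ) - 1) ≤ n) : qq a b a' n = 1 := by
  unfold qq
  rw [if_pos]
  by_contra h
  push_neg at h
  have h1 : (b:ℤ) ≤ (a : ℤ) * ii b a' n - n :=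
    Int.le_of_dvd (by omega) (ii_dvd ha' n)
  have h2 : ii b a' n ≤ (b:ℤ) - 1 := by have := ii_lt (a' := a') hb n; omega
  have h3 : (a:ℤ) * ii b a' n ≤ (a:ℤ) * ((b:ℤ) - 1) :=
    mul_le_mul_of_nonneg_left h2 (by positivity)
  nlinarith

lemma qq_frob (ha : 2 ≤ a) (hb : 2 ≤ b) (ha' : (b : ℤ) ∣ (a * a' - 1)) :
    qq a b a' ((a:ℤ) * b - a - b) = 0 := by
  have hiv : ((b:ℤ) - 1) = ii b a' ((a:ℤ) * b - a - b) := by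
    apply ii_unique hb ha' (by omega) (by omega)
    have e : (a:ℤ) * ((b:ℤ) - 1) - ((a:ℤ) * b - a - b) = (b:ℤ) := by ring
    rw [e]
  unfold qq
  rw [← hiv, if_neg]
  have ha2 : (2:ℤ) ≤ a := by exact_mod_cast ha
  have hb2 : (2:ℤ) ≤ b := by exact_mod_cast hb
  nlinarith

lemma ii_sub_b (hb : 2 ≤ b) (ha' : (b : ℤ) ∣ (a * a' - 1)) (n : ℤ) :
    ii b a' (n - b) = ii b a' n := by
  refine (ii_unique hb ha' (ii_nonneg hb n) (ii_lt hb n) ?_).symm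
  have e : (a:ℤ) * ii b a' n - (n - b) = ((a:ℤ) * ii b a' n - n) + b := by ring
  rw [e]
  exact dvd_add (ii_dvd ha' n) dvd_rfl

lemma ii_sub_a_pos (hb : 2 ≤ b) (ha' : (b : ℤ) ∣ (a * a' - 1)) {n : ℤ}
    (h : 1 ≤ ii b a' n) : ii b a' (n - a) = ii b a' n - 1 := by
  refine (ii_unique hb ha' (by omega) ?_ ?_).symm
  · have := ii_lt (a' := a') hb n; omega
  · have e : (a:ℤ) * (ii b a' n - 1) - (n - a) = (a:ℤ) * ii b a' n - n := by ring
    rw [e]; exact ii_dvd ha' n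

lemma ii_sub_a_zero (hb : 2 ≤ b) (ha' : (b : ℤ) ∣ (a * a' - 1)) {n : ℤ}
    (h : ii b a' n = 0) : ii b a' (n - a) = (b:ℤ) - 1 := by
  have hbn : (b:ℤ) ∣ n := by
    have := ii_dvd (a := a) ha' n
    rw [h, mul_zero, zero_sub] at this
    exact (dvd_neg.mp this)
  refine (ii_unique hb ha' (by omega) (by omega) ?_).symm
  have e : (a:ℤ) * ((b:ℤ) - 1) - (n - a) = (a:ℤ) * b - n := by ring
  rw [e]
  exact dvd_sub (dvd_mul_left _ _) hbn

end


section
variable {a b : ℕ} {a' : ℤ}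

lemma ifsum (B c n : ℤ) (hB : 0 < B) (hBc : B ≤ c) (h5 : n ≤ 0 ∨ B ≤ n)
    (h6 : n ≤ c ∨ c + B ≤ n) :
    (if (0:ℤ) ≤ n then (1:ℤ) else 0) - (if c ≤ n then 1 else 0)
      - (if B ≤ n then 1 else 0) + (if c + B ≤ n then 1 else 0)
      = (if n = 0 then 1 else 0) - (if n = c then 1 else 0) := by
  split_ifs <;> omega

lemma qq_star (ha : 2 ≤ a) (hb : 2 ≤ b) (ha' : (b : ℤ) ∣ (a * a' - 1)) (n : ℤ) :
    qq a b a' n - qq a b a' (n - a) - qq a b a' (n - b) + qq a b a' (n - a - b)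
      = (if n = 0 then 1 else 0) - (if n = (a:ℤ) * b then 1 else 0) := by
  have ha2 : (2:ℤ) ≤ a := by exact_mod_cast ha
  have hb2 : (2:ℤ) ≤ b := by exact_mod_cast hb
  have hi0 := ii_nonneg (a' := a') hb n
  have hilt := ii_lt (a' := a') hb n
  rcases eq_or_lt_of_le hi0 with hz | hpos
  · -- case ii n = 0, so b ∣ n
    have hz : ii b a' n = 0 := hz.symm
    have hbn : (b:ℤ) ∣ n := by
      have := ii_dvd (a := a) ha' n
      rw [hz, mul_zero, zero_sub] at this
      exact dvd_neg.mp this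
    have e1 : qq a b a' n = if (0:ℤ) ≤ n then 1 else 0 := by
      unfold qq; rw [hz, mul_zero]
    have e2 : qq a b a' (n - b) = if (b:ℤ) ≤ n then 1 else 0 := by
      unfold qq; rw [ii_sub_b hb ha', hz, mul_zero]
      refine if_congr ?_ rfl rfl
      constructor <;> intro <;> linarith
    have e3 : qq a b a' (n - a) = if (a:ℤ) * b ≤ n then 1 else 0 := by
      unfold qq
      rw [ii_sub_a_zero hb ha' hz]
      have hx : (a:ℤ) * ((b:ℤ) - 1) = (a:ℤ) * b - a := by ring
      refine if_congr ?_ rfl rfl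
      constructor <;> intro <;> linarith
    have e4 : qq a b a' (n - a - b) = if (a:ℤ) * b + b ≤ n then 1 else 0 := by
      unfold qq
      rw [ii_sub_b hb ha' (n - a), ii_sub_a_zero hb ha' hz]
      have hx : (a:ℤ) * ((b:ℤ) - 1) = (a:ℤ) * b - a := by ring
      refine if_congr ?_ rfl rfl
      constructor <;> intro <;> linarith
    rw [e1, e2, e3, e4]
    refine ifsum _ _ _ (by omega) (by nlinarith) ?_ ?_
    · rcases le_or_gt n 0 with h | h
      · exact Or.inl h
      · exact Or.inr (Int.le_of_dvd h hbn)
    · rcases le_or_gt n ((a:ℤ) * b) with h | h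
      · exact Or.inl h
      · refine Or.inr ?_
        have hd : (b:ℤ) ∣ n - (a:ℤ) * b := dvd_sub hbn (dvd_mul_left _ _)
        have := Int.le_of_dvd (by linarith) hd
        linarith
  · -- case 1 ≤ ii n
    have hexp : (a:ℤ) * (ii b a' n - 1) = (a:ℤ) * ii b a' n - a := by ring
    have e3 : qq a b a' (n - a) = qq a b a' n := by
      unfold qq
      rw [ii_sub_a_pos hb ha' (by omega)]
      refine if_congr ?_ rfl rfl
      constructor <;> intro <;> linarith
    have e2 : qq a b a' (n - b)
        = if (a:ℤ) * ii b a' n ≤ n - b then 1 else 0 := by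
      unfold qq; rw [ii_sub_b hb ha']
    have e4 : qq a b a' (n - a - b)
        = if (a:ℤ) * ii b a' n ≤ n - b then 1 else 0 := by
      unfold qq
      rw [ii_sub_b hb ha' (n - a), ii_sub_a_pos hb ha' (by omega)]
      refine if_congr ?_ rfl rfl
      constructor <;> intro <;> linarith
    have hib : ¬ (b:ℤ) ∣ ii b a' n := by
      intro hdvd
      have := Int.le_of_dvd hpos hdvd
      omega
    have hn0 : n ≠ 0 := by
      rintro rfl
      refine hib (dvd_cancel ha' ?_)
      have := ii_dvd (a := a) ha' 0
      rwa [sub_zero] at this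
    have hnc : n ≠ (a:ℤ) * b := by
      intro h
      have h1 := ii_dvd (a := a) ha' n
      have h1' : (b:ℤ) ∣ (a:ℤ) * ii b a' n - (a:ℤ) * b := by rwa [← h]
      have h2 : (b:ℤ) ∣ (a:ℤ) * (ii b a' n - b) := by
        have e : (a:ℤ) * (ii b a' n - b) = (a:ℤ) * ii b a' n - (a:ℤ) * b := by ring
        rw [e]; exact h1'
      have h3 := dvd_cancel ha' h2
      refine hib ?_
      have h4 := dvd_add h3 (dvd_refl (b:ℤ))
      rwa [sub_add_cancel] at h4
    rw [e2, e3, e4, if_neg hn0, if_neg hnc]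
    ring

end

section
variable {a b : ℕ} {a' : ℤ}

lemma pp_neg (hb : 2 ≤ b) {n : ℤ} (hn : n < 0) : pp a b a' n = 0 := by
  unfold pp
  rw [qq_neg hb hn, qq_neg hb (by omega)]
  ring

lemma pp_big (ha : 2 ≤ a) (hb : 2 ≤ b) (ha' : (b : ℤ) ∣ (a * a' - 1)) {n : ℤ}
    (hn : ((a:ℤ) - 1) * ((b:ℤ) - 1) < n) : pp a b a' n = 0 := by
  unfold pp
  rw [qq_big ha hb ha' (by omega), qq_big ha hb ha' (by omega)]
  ring

lemma pp_star (ha : 2 ≤ a) (hb : 2 ≤ b) (ha' : (b : ℤ) ∣ (a * a' - 1)) (n : ℤ) :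
    pp a b a' n - pp a b a' (n - a) - pp a b a' (n - b) + pp a b a' (n - a - b)
      = (if n = 0 then 1 else 0) - (if n = 1 then 1 else 0)
        - (if n = (a:ℤ) * b then 1 else 0) + (if n = (a:ℤ) * b + 1 then 1 else 0) := by
  have s1 := qq_star ha hb ha' n
  have s2 := qq_star ha hb ha' (n - 1)
  rw [show n - 1 - (a:ℤ) = n - a - 1 from by ring,
    show n - 1 - (b:ℤ) = n - b - 1 from by ring] at s2
  rw [show n - (a:ℤ) - 1 - b = n - a - b - 1 from by ring] at s2
  have i1 : (if n - 1 = 0 then (1:ℤ) else 0) = (if n = 1 then 1 else 0) :=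
    if_congr (by omega) rfl rfl
  have i2 : (if n - 1 = (a:ℤ) * b then (1:ℤ) else 0)
      = (if n = (a:ℤ) * b + 1 then 1 else 0) :=
    if_congr ⟨fun h => by linarith, fun h => by linarith⟩ rfl rfl
  rw [i1, i2] at s2
  unfold pp
  linarith

end

section

variable {a b : ℕ} {a' : ℤ} {d : ℕ}

lemma coeff_P0 (ha : 2 ≤ a) (hb : 2 ≤ b) (ha' : (b : ℤ) ∣ (a * a' - 1))
    (hdD : (d:ℤ) = ((a:ℤ) - 1) * ((b:ℤ) - 1)) (n : ℕ) :
    (∑ k ∈ Finset.range (d+1), Polynomial.C (pp a b a' k) * Polynomial.X ^ k).coeff n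
      = pp a b a' n := by
  rw [Polynomial.finset_sum_coeff]
  simp only [Polynomial.coeff_C_mul, Polynomial.coeff_X_pow, mul_ite, mul_one, mul_zero]
  rw [Finset.sum_ite_eq]
  split_ifs with h
  · rfl
  · symm
    apply pp_big ha hb ha'
    rw [← hdD]
    simp only [Finset.mem_range] at h
    omega

lemma key (ha : 2 ≤ a) (hb : 2 ≤ b) (ha' : (b : ℤ) ∣ (a * a' - 1))
    (hdD : (d:ℤ) = ((a:ℤ) - 1) * ((b:ℤ) - 1)) :
    ((Polynomial.X : ℤ[X]) ^ a - 1) * ((Polynomial.X : ℤ[X]) ^ b - 1) *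
        (∑ k ∈ Finset.range (d+1), Polynomial.C (pp a b a' k) * Polynomial.X ^ k)
      = ((Polynomial.X : ℤ[X]) ^ (a * b) - 1) * (Polynomial.X - 1) := by
  set P₀ : ℤ[X] := ∑ k ∈ Finset.range (d+1), Polynomial.C (pp a b a' k) * Polynomial.X ^ k
    with hP₀
  have hco : ∀ n : ℕ, P₀.coeff n = pp a b a' n := coeff_P0 ha hb ha' hdD
  have expand : ((Polynomial.X : ℤ[X]) ^ a - 1) * ((Polynomial.X : ℤ[X]) ^ b - 1) * P₀
      = P₀ * Polynomial.X ^ (a+b) - P₀ * Polynomial.X ^ a - P₀ * Polynomial.X ^ b + P₀ := by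
    ring
  have rhs : ((Polynomial.X : ℤ[X]) ^ (a * b) - 1) * (Polynomial.X - 1)
      = Polynomial.X ^ (a*b+1) - Polynomial.X ^ (a*b) - Polynomial.X ^ 1 + 1 := by
    ring
  rw [expand, rhs]
  ext n
  rw [Polynomial.coeff_add, Polynomial.coeff_sub, Polynomial.coeff_sub,
    Polynomial.coeff_add, Polynomial.coeff_sub, Polynomial.coeff_sub,
    Polynomial.coeff_mul_X_pow', Polynomial.coeff_mul_X_pow', Polynomial.coeff_mul_X_pow',
    Polynomial.coeff_X_pow, Polynomial.coeff_X_pow, Polynomial.coeff_X_pow,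
    Polynomial.coeff_one]
  have g : ∀ k : ℕ, (if k ≤ n then P₀.coeff (n - k) else 0) = pp a b a' ((n:ℤ) - k) := by
    intro k
    split_ifs with h
    · rw [hco]; congr 1; omega
    · symm; apply pp_neg hb; omega
  rw [g, g, g, hco]
  have hstar := pp_star ha hb ha' (n : ℤ)
  have c1 : (n:ℤ) - ((a + b : ℕ) : ℤ) = (n:ℤ) - a - b := by push_cast; ring
  rw [c1]
  have i0 : (if (n:ℤ) = 0 then (1:ℤ) else 0) = (if n = 0 then 1 else 0) :=
    if_congr (by omega) rfl rfl
  have i1 : (if (n:ℤ) = 1 then (1:ℤ) else 0) = (if n = 1 then 1 else 0) :=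
    if_congr (by omega) rfl rfl
  have iab : (if (n:ℤ) = (a:ℤ) * b then (1:ℤ) else 0) = (if n = a * b then 1 else 0) :=
    if_congr ⟨fun h => by exact_mod_cast h, fun h => by exact_mod_cast h⟩ rfl rfl
  have iab1 : (if (n:ℤ) = (a:ℤ) * b + 1 then (1:ℤ) else 0)
      = (if n = a * b + 1 then 1 else 0) := by
    refine if_congr ?_ rfl rfl
    constructor <;> intro h <;> exact_mod_cast h
  rw [i0, i1, iab, iab1] at hstar
  linarith

lemma abel (a b : ℕ) (a' : ℤ) (m : ℤ) (M : ℕ) :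
    ∑ j ∈ Finset.Icc 1 M, (j:ℤ) * pp a b a' (m + j)
      = (M:ℤ) * qq a b a' (m + M) - ∑ j ∈ Finset.range M, qq a b a' (m + j) := by
  induction M with
  | zero => simp [qq]
  | succ M ih =>
    rw [Finset.sum_Icc_succ_top (by omega), Finset.sum_range_succ, ih]
    simp only [pp]
    push_cast
    rw [show m + ((M:ℤ) + 1) - 1 = m + M from by ring]
    ring

end
end Stmt14

open Polynomial

/-- For coprime `a, b ≥ 2` and
`P = ((X^(ab) - 1)(X - 1)) / ((X^a - 1)(X^b - 1))` in `ℤ[X]` with even degree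
`d = (a-1)(b-1)`, the 0-th torsion coefficient
`t₀ = ∑_{j=1}^{d/2} j * P.coeff (d/2 + j)` is strictly positive. -/
theorem stmt_14 (a b : ℕ) (ha : 2 ≤ a) (hb : 2 ≤ b) (hab : Nat.Coprime a b)
    (P : ℤ[X])
    (hP : ((X : ℤ[X]) ^ a - 1) * ((X : ℤ[X]) ^ b - 1) * P =
      ((X : ℤ[X]) ^ (a * b) - 1) * ((X : ℤ[X]) - 1))
    (d : ℕ) (hd : d = (a - 1) * (b - 1)) :
    Even d ∧
      0 < ∑ j ∈ Finset.Icc 1 (d / 2), (j : ℤ) * P.coeff (d / 2 + j) := by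
  -- Even d
  have hpar : Even d := by
    rw [hd]
    rcases Nat.even_or_odd a with hA | hA
    · have hBodd : Odd b := by
        rcases Nat.even_or_odd b with hB | hB
        · exfalso
          have h2 : (2:ℕ) ∣ Nat.gcd a b := Nat.dvd_gcd hA.two_dvd hB.two_dvd
          rw [Nat.Coprime.gcd_eq_one hab] at h2
          omega
        · exact hB
      exact (Nat.Odd.sub_odd hBodd odd_one).mul_left _
    · exact (Nat.Odd.sub_odd hA odd_one).mul_right _
  refine ⟨hpar, ?_⟩
  -- modular inverse of a mod b
  obtain ⟨u, v, huv⟩ := Nat.isCoprime_iff_coprime.mpr hab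
  have ha' : (b:ℤ) ∣ ((a:ℤ) * u - 1) := ⟨-v, by linarith⟩
  have hdD : (d:ℤ) = ((a:ℤ) - 1) * ((b:ℤ) - 1) := by
    rw [hd, Nat.cast_mul, Nat.cast_sub (by omega), Nat.cast_sub (by omega),
      Nat.cast_one]
  -- identify P
  have hne : ((X : ℤ[X]) ^ a - 1) * ((X : ℤ[X]) ^ b - 1) ≠ 0 := by
    have h1 : ((X : ℤ[X]) ^ a - 1) ≠ 0 := by
      have := Polynomial.X_pow_sub_C_ne_zero (R := ℤ) (by omega : 0 < a) 1
      simpa using this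
    have h2 : ((X : ℤ[X]) ^ b - 1) ≠ 0 := by
      have := Polynomial.X_pow_sub_C_ne_zero (R := ℤ) (by omega : 0 < b) 1
      simpa using this
    exact mul_ne_zero h1 h2
  have hPP : P = ∑ k ∈ Finset.range (d+1), Polynomial.C (Stmt14.pp a b u k) * X ^ k :=
    mul_left_cancel₀ hne (hP.trans (Stmt14.key ha hb ha' hdD).symm)
  have hcoeff : ∀ n : ℕ, P.coeff n = Stmt14.pp a b u n := by
    intro n
    rw [hPP]
    exact Stmt14.coeff_P0 ha hb ha' hdD n
  -- d ≥ 2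
  have hd1 : 1 ≤ d := by
    rw [hd]; exact Nat.one_le_iff_ne_zero.mpr (Nat.mul_ne_zero (by omega) (by omega))
  have hm2 : d / 2 * 2 = d := Nat.div_mul_cancel hpar.two_dvd
  obtain ⟨k, hk⟩ : ∃ k, d / 2 = k + 1 := ⟨d / 2 - 1, by omega⟩
  -- rewrite sum
  have hsum : ∑ j ∈ Finset.Icc 1 (d / 2), (j : ℤ) * P.coeff (d / 2 + j)
      = ∑ j ∈ Finset.Icc 1 (d / 2), (j : ℤ) * Stmt14.pp a b u (((d / 2 : ℕ) : ℤ) + j) := by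
    refine Finset.sum_congr rfl fun j _ => ?_
    rw [hcoeff]
    push_cast
    ring_nf
  rw [hsum, Stmt14.abel a b u ((d / 2 : ℕ) : ℤ) (d / 2)]
  have hq1 : Stmt14.qq a b u (((d / 2 : ℕ) : ℤ) + ((d / 2 : ℕ) : ℤ)) = 1 := by
    have harg : ((d / 2 : ℕ) : ℤ) + ((d / 2 : ℕ) : ℤ) = (d : ℤ) := by omega
    rw [harg]
    exact Stmt14.qq_big ha hb ha' (le_of_eq hdD.symm)
  rw [hq1, hk, Finset.sum_range_succ]
  have hfrob : Stmt14.qq a b u (((k+1 : ℕ) : ℤ) + (k : ℤ)) = 0 := by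
    have harg : ((k+1 : ℕ) : ℤ) + (k : ℤ) = (a:ℤ) * b - a - b := by
      have h1 : ((k+1 : ℕ) : ℤ) + (k : ℤ) = (d : ℤ) - 1 := by omega
      rw [h1, hdD]; ring
    rw [harg]
    exact Stmt14.qq_frob ha hb ha'
  rw [hfrob]
  have hbd : ∑ j ∈ Finset.range k, Stmt14.qq a b u (((k+1 : ℕ) : ℤ) + j) ≤ (k : ℤ) := by
    have := Finset.sum_le_card_nsmul (Finset.range k)
      (fun j : ℕ => Stmt14.qq a b u (((k+1 : ℕ) : ℤ) + j)) 1
      (fun x _ => Stmt14.qq_le_one _)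
    simpa using this
  push_cast
  push_cast at hbd
  linarith
end
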